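/- arXiv:1309.6475 — 2 statements merged into one kernel-verified Lean document; each statement's English description precedes it below -/
import Mathlib

section
/- Let dim S_1 = 3 and f ∈ S_4. Then there exist nonzero x^0, x^1, x^2 ∈ S^1 (not required to be linearly independent) such that (x^0 x^1 x^2)⌟f = 0; equivalently, some cubic form in S^3 that splits as a product of three linear forms annihilates f under contraction. -/
open MvPolynomial

/-- The element of `S_1` (the space of linear ternary forms) with coefficient
vector `c` with respect to the fixed basis `X 0, X 1, X 2`. -/
noncomputable def lin {K : Type*} [Field K] (c : Fin 3 → K) : MvPolynomial (Fin 3) K :=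
  ∑ j, C (c j) * X j

/-- Contraction `c ⌟ f` of `f ∈ S_•` by the element of `S^1 = (S_1)^*` with coordinates `c`
in the dual basis: the constant-coefficient first-order differential operator determined
by `c`, extended multiplicatively by `(st) ⌟ f = s ⌟ (t ⌟ f)` (i.e. by composition). -/
noncomputable def contra {K : Type*} [Field K] (c : Fin 3 → K)
    (f : MvPolynomial (Fin 3) K) : MvPolynomial (Fin 3) K :=
  ∑ j, c j • pderiv j f

/-- The Waring rank of a ternary quartic: the least `r` such that `f` is a sum of `r`
fourth powers of elements of `S_1`. -/
noncomputable def wrank {K : Type*} [Field K] (f : MvPolynomial (Fin 3) K) : ℕ :=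
  sInf {r : ℕ | ∃ c : Fin r → (Fin 3 → K), f = ∑ i, (lin (c i)) ^ 4}

/-!
Fix any nonzero `x²` and put `g = x² ⌟ f`, a ternary cubic. For a quadratic form `Q`, the linear
form `x ⌟ Q` has coefficient vector `Hess(Q) x`, so it suffices to find `x¹ ≠ 0` such that
`Hess(x¹ ⌟ g)` is singular, and then take `x⁰` in its kernel. Now `x ↦ Hess(x ⌟ g)` is linear on a
space of dimension `3 ≥ 2`, and over an algebraically closed field every pencil `sA + tB` of
square matrices has a singular member with `(s, t) ≠ 0`: either `A` is singular, or `c A - B` is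
for an eigenvalue `c` of `A⁻¹ B`.
-/

theorem Matrix.exists_det_smul_add_smul_eq_zero {n K : Type*} [Fintype n] [DecidableEq n]
    [Nonempty n] [Field K] [IsAlgClosed K] (A B : Matrix n n K) :
    ∃ s t : K, (s ≠ 0 ∨ t ≠ 0) ∧ (s • A + t • B).det = 0 := by
  by_cases hA : A.det = 0
  · exact ⟨1, 0, .inl one_ne_zero, by simpa using hA⟩
  obtain ⟨c, hc⟩ := IsAlgClosed.exists_root (A⁻¹ * B).charpoly <| by
    rw [Matrix.charpoly_degree_eq_dim]
    exact_mod_cast Fintype.card_ne_zero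
  refine ⟨c, -1, .inr (neg_ne_zero.mpr one_ne_zero), ?_⟩
  have hAc : A * (Matrix.scalar n c - A⁻¹ * B) = c • A + (-1 : K) • B := by
    rw [mul_sub, ← mul_assoc, Matrix.mul_nonsing_inv _ (isUnit_iff_ne_zero.mpr hA), one_mul,
      Matrix.scalar_apply, ← Matrix.smul_one_eq_diagonal, mul_smul_comm, mul_one, neg_one_smul,
      sub_eq_add_neg]
  rw [← hAc, Matrix.det_mul, ← Matrix.eval_charpoly, hc.eq_zero, mul_zero]

theorem LinearMap.exists_ne_zero_det_eq_zero {n K V : Type*} [Fintype n] [DecidableEq n]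
    [Nonempty n] [Field K] [IsAlgClosed K] [AddCommGroup V] [Module K V]
    (M : V →ₗ[K] Matrix n n K) (hV : 1 < Module.finrank K V) :
    ∃ x ≠ 0, (M x).det = 0 := by
  have : Nontrivial V := Module.nontrivial_of_finrank_pos (zero_lt_one.trans hV)
  obtain ⟨a, ha⟩ := exists_ne (0 : V)
  obtain ⟨b, hab⟩ := exists_linearIndependent_pair_of_one_lt_finrank hV ha
  obtain ⟨s, t, hst, hdet⟩ := (M a).exists_det_smul_add_smul_eq_zero (M b)
  refine ⟨s • a + t • b, fun h => ?_, by simpa using hdet⟩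
  obtain ⟨rfl, rfl⟩ := LinearIndependent.pair_iff.mp hab s t h
  simp at hst

namespace MvPolynomial

theorem IsHomogeneous.eq_zero_of_forall_pderiv_eq_zero {σ R : Type*} [Fintype σ] [CommRing R]
    [IsDomain R] {φ : MvPolynomial σ R} {n : ℕ} (hφ : φ.IsHomogeneous n) (hn : (n : R) ≠ 0)
    (h : ∀ i, pderiv i φ = 0) : φ = 0 := by
  have euler := hφ.sum_X_mul_pderiv
  simp only [h, mul_zero, Finset.sum_const_zero, nsmul_eq_mul] at euler
  rw [← map_natCast (C : R →+* MvPolynomial σ R)] at euler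
  exact (mul_eq_zero.mp euler.symm).resolve_left (C_ne_zero.mpr hn)

/-- For a quadratic form this is its Hessian matrix; in general, the Hessian at the origin. -/
noncomputable def hessian {σ R : Type*} [CommSemiring R] :
    MvPolynomial σ R →ₗ[R] Matrix σ σ R where
  toFun Q := Matrix.of fun i j => coeff 0 (pderiv i (pderiv j Q))
  map_add' P Q := by ext; simp
  map_smul' r Q := by ext; simp

theorem IsHomogeneous.contra {K : Type*} [Field K] {f : MvPolynomial (Fin 3) K} {n : ℕ}
    (hf : f.IsHomogeneous n) (c : Fin 3 → K) : (_root_.contra c f).IsHomogeneous (n - 1) :=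
  Submodule.sum_mem (homogeneousSubmodule _ _ _) fun j _ => Submodule.smul_mem _ (c j) hf.pderiv

end MvPolynomial

noncomputable def contraLin {K : Type*} [Field K] (f : MvPolynomial (Fin 3) K) :
    (Fin 3 → K) →ₗ[K] MvPolynomial (Fin 3) K where
  toFun c := contra c f
  map_add' a b := by simp [contra, add_smul, Finset.sum_add_distrib]
  map_smul' s c := by simp [contra, mul_smul, Finset.smul_sum]

open Matrix in
theorem contra_eq_zero_of_hessian_mulVec_eq_zero {K : Type*} [Field K]
    {Q : MvPolynomial (Fin 3) K} (hQ : Q.IsHomogeneous 2) {c : Fin 3 → K}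
    (h : hessian Q *ᵥ c = 0) : contra c Q = 0 := by
  refine (hQ.contra c).eq_zero_of_forall_pderiv_eq_zero (by simp) fun i => ?_
  have hconst (j : Fin 3) : pderiv i (pderiv j Q) = C (hessian Q i j) :=
    totalDegree_eq_zero_iff_eq_C.mp <| (totalDegree_zero_iff_isHomogeneous _).mpr
      hQ.pderiv.pderiv
  calc pderiv i (contra c Q) = ∑ j, c j • pderiv i (pderiv j Q) := by simp [contra]
    _ = C ((hessian Q *ᵥ c) i) := by simp [hconst, mulVec, dotProduct, smul_eq_C_mul, mul_comm]
    _ = 0 := by rw [h, Pi.zero_apply, map_zero]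

theorem exists_split_cubic_apolar_general
    {K : Type*} [Field K] [IsAlgClosed K]
    (f : MvPolynomial (Fin 3) K) (hf : f.IsHomogeneous 4) :
    ∃ x0 x1 x2 : Fin 3 → K, x0 ≠ 0 ∧ x1 ≠ 0 ∧ x2 ≠ 0 ∧
      contra x0 (contra x1 (contra x2 f)) = 0 := by
  set x2 : Fin 3 → K := Pi.single 0 1
  have hg : (contra x2 f).IsHomogeneous 3 := hf.contra x2
  obtain ⟨x1, hx1, hsing⟩ :=
    (hessian ∘ₗ contraLin (contra x2 f)).exists_ne_zero_det_eq_zero (by simp)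
  obtain ⟨x0, hx0, hx⟩ := Matrix.exists_mulVec_eq_zero_iff.mpr hsing
  exact ⟨x0, x1, x2, hx0, hx1, by simp [x2],
    contra_eq_zero_of_hessian_mulVec_eq_zero (hg.contra x1) hx⟩

/-- For every ternary quartic `f` there exist nonzero `x⁰, x¹, x² ∈ S^1` (not required to be
linearly independent) such that `(x⁰x¹x²) ⌟ f = 0`: some totally split cubic form in `S^3`
annihilates `f` under contraction. -/
theorem exists_split_cubic_apolar
    {K : Type*} [Field K] [IsAlgClosed K] [CharZero K]
    (f : MvPolynomial (Fin 3) K) (hf : f.IsHomogeneous 4) :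
    ∃ x0 x1 x2 : Fin 3 → K, x0 ≠ 0 ∧ x1 ≠ 0 ∧ x2 ≠ 0 ∧
      contra x0 (contra x1 (contra x2 f)) = 0 :=
  exists_split_cubic_apolar_general f hf
end

section
/- Let dim S_1 = 3, f ∈ S_4, and let x^0, x^1 ∈ S^1 be linearly independent with (x^0 x^1)⌟f = 0. Choose any nonzero x_2 ∈ {x^0, x^1}^⊥, any x_1 ∈ {x^0}^⊥ − ⟨x_2⟩ and any x_0 ∈ {x^1}^⊥ − ⟨x_2⟩. Then f ∈ S^4⟨x_1, x_2⟩ + S^4⟨x_0, x_2⟩, i.e., f = f_0 + f_1 where f_0 is a quartic form in the two variables x_1, x_2 and f_1 is a quartic form in the two variables x_0, x_2. -/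
open MvPolynomial

/-- `S^4(T) ⊆ S_4`: the span of products of four linear forms with coefficient vectors in
`T ⊆ S_1`, i.e. the image in `S_4` of the fourth symmetric power of (the span of) `T`. -/
noncomputable def symPow4 {K : Type*} [Field K] (T : Set (Fin 3 → K)) :
    Submodule K (MvPolynomial (Fin 3) K) :=
  Submodule.span K {q | ∃ w : Fin 4 → (Fin 3 → K), (∀ i, w i ∈ T) ∧ q = ∏ i, lin (w i)}

/-!
`x⁰` and `x¹` cut out the line `⟨v₂⟩`, so `x⁰(v₀) ≠ 0` and `x¹(v₁) ≠ 0`; hence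
`v₀, v₁, v₂` is a basis of `S₁` and `f = g(v₀, v₁, v₂)` for a ternary quartic `g`. As `x⁰` kills
`v₁, v₂` and `x¹` kills `v₀, v₂`, the chain rule turns `(x⁰x¹) ⌟ f = 0` into `∂₀∂₁ g = 0`: no
monomial of `g` involves both its first and second variable. The monomials without the first
variable give a quartic in `v₁, v₂`, the remaining ones a quartic in `v₀, v₂`.
-/

open Matrix

section LinearAlgebra

variable {K : Type*} [Field K]

theorem Matrix.ker_mulVecLin_eq_span_singleton {m n : Type*} [Fintype m] [Fintype n]
    {M : Matrix m n K} (hM : LinearIndependent K M.row)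
    (hcard : Fintype.card n = Fintype.card m + 1) {v : n → K} (hv : v ≠ 0) (hMv : M *ᵥ v = 0) :
    LinearMap.ker M.mulVecLin = Submodule.span K {v} := by
  refine (Submodule.eq_of_le_of_finrank_le ?_ ?_).symm
  · rwa [Submodule.span_le, Set.singleton_subset_iff, SetLike.mem_coe, LinearMap.mem_ker]
  · have := LinearMap.finrank_range_add_finrank_ker M.mulVecLin
    rw [← Matrix.rank, hM.rank_matrix, Module.finrank_fintype_fun_eq_card] at this
    rw [finrank_span_singleton hv]
    omega

theorem mem_span_of_dotProduct_eq_zero {x y v u : Fin 3 → K} (hxy : LinearIndependent K ![x, y])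
    (hv : v ≠ 0) (hxv : x ⬝ᵥ v = 0) (hyv : y ⬝ᵥ v = 0) (hxu : x ⬝ᵥ u = 0) (hyu : y ⬝ᵥ u = 0) :
    u ∈ Submodule.span K {v} := by
  have hker (w : Fin 3 → K) (hx : x ⬝ᵥ w = 0) (hy : y ⬝ᵥ w = 0) : of ![x, y] *ᵥ w = 0 := by
    ext i; fin_cases i <;> assumption
  rw [← ker_mulVecLin_eq_span_singleton hxy rfl hv (hker v hxv hyv)]
  exact hker u hxu hyu

theorem linearIndependent_of_dotProduct {n : Type*} [Fintype n] {x y u v w : n → K}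
    (hxu : x ⬝ᵥ u ≠ 0) (hxv : x ⬝ᵥ v = 0) (hxw : x ⬝ᵥ w = 0)
    (hyu : y ⬝ᵥ u = 0) (hyv : y ⬝ᵥ v ≠ 0) (hyw : y ⬝ᵥ w = 0) (hw : w ≠ 0) :
    LinearIndependent K ![u, v, w] := by
  rw [Fintype.linearIndependent_iff]
  intro c hc
  simp only [Fin.sum_univ_three, Matrix.cons_val] at hc
  have hx := congrArg (x ⬝ᵥ ·) hc
  have hy := congrArg (y ⬝ᵥ ·) hc
  simp only [dotProduct_add, dotProduct_smul, smul_eq_mul, dotProduct_zero, hxv, hxw, hyu,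
    hyw, mul_zero, add_zero, zero_add, mul_eq_zero, hxu, hyv, or_false] at hx hy
  simp only [hx, hy, zero_smul, zero_add, smul_eq_zero, hw, or_false] at hc
  intro i; fin_cases i <;> assumption

end LinearAlgebra

namespace MvPolynomial

theorem eq_zero_or_eq_zero_of_pderiv_pderiv_eq_zero {σ R : Type*} [CommSemiring R]
    [NoZeroDivisors R] [CharZero R] {i j : σ} (hij : i ≠ j) {p : MvPolynomial σ R}
    (hp : pderiv i (pderiv j p) = 0) {m : σ →₀ ℕ} (hm : m ∈ p.support) : m i = 0 ∨ m j = 0 := by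
  classical
  by_contra! hmij
  obtain ⟨n, rfl⟩ : ∃ n, m = n + Finsupp.single i 1 + Finsupp.single j 1 := by
    refine ⟨m - Finsupp.single i 1 - Finsupp.single j 1, Finsupp.ext fun k => ?_⟩
    simp only [Finsupp.add_apply, Finsupp.tsub_apply, Finsupp.single_apply]
    split_ifs <;> grind
  have hcoeff := congrArg (coeff n) hp
  rw [coeff_pderiv, coeff_pderiv, coeff_zero] at hcoeff
  simp only [mul_eq_zero, Nat.cast_add_one_ne_zero, or_false] at hcoeff
  exact mem_support_iff.mp hm hcoeff

theorem restrictSupport_union (R : Type*) {σ : Type*} [CommSemiring R] (s t : Set (σ →₀ ℕ)) :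
    restrictSupport R (s ∪ t) = restrictSupport R s ⊔ restrictSupport R t := by
  simp only [restrictSupport_eq_span, Set.image_union, Submodule.span_union]

end MvPolynomial

section TernaryForms

variable {K : Type*} [Field K]

@[simp]
theorem lin_one_apply (i : Fin 3) : lin ((1 : Matrix (Fin 3) (Fin 3) K) i) = X i := by
  simp [lin, one_apply]

theorem lin_isHomogeneous (v : Fin 3 → K) : (lin v).IsHomogeneous 1 :=
  IsHomogeneous.sum _ _ _ fun _ _ => isHomogeneous_C_mul_X _ _

/-- `linSubst A g` is `g` evaluated at the linear forms with coefficient vectors the rows of `A`. -/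
noncomputable def linSubst (A : Matrix (Fin 3) (Fin 3) K) :
    MvPolynomial (Fin 3) K →ₐ[K] MvPolynomial (Fin 3) K :=
  aeval fun i => lin (A i)

@[simp]
theorem linSubst_X (A : Matrix (Fin 3) (Fin 3) K) (i : Fin 3) : linSubst A (X i) = lin (A i) :=
  aeval_X _ _

theorem linSubst_lin (A : Matrix (Fin 3) (Fin 3) K) (v : Fin 3 → K) :
    linSubst A (lin v) = lin (v ᵥ* A) := by
  simp only [lin, map_sum, map_mul, algHom_C, linSubst_X, vecMul, dotProduct, Finset.mul_sum,
    ← mul_assoc, Finset.sum_mul, algebraMap_eq]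
  exact Finset.sum_comm

theorem linSubst_comp (A B : Matrix (Fin 3) (Fin 3) K) :
    (linSubst A).comp (linSubst B) = linSubst (B * A) := by
  refine algHom_ext fun i => ?_
  rw [AlgHom.comp_apply, linSubst_X, linSubst_X, linSubst_lin]
  rfl

theorem linSubst_one : linSubst (1 : Matrix (Fin 3) (Fin 3) K) = AlgHom.id K _ :=
  algHom_ext fun i => by simp

theorem linSubst_linSubst_of_mul_eq_one {A B : Matrix (Fin 3) (Fin 3) K} (h : B * A = 1)
    (p : MvPolynomial (Fin 3) K) : linSubst A (linSubst B p) = p := by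
  rw [← AlgHom.comp_apply, linSubst_comp, h, linSubst_one, AlgHom.id_apply]

theorem linSubst_injective {A : Matrix (Fin 3) (Fin 3) K} (hA : IsUnit A) :
    Function.Injective (linSubst A) :=
  Function.LeftInverse.injective (g := linSubst A⁻¹) <| linSubst_linSubst_of_mul_eq_one <|
    mul_nonsing_inv A ((isUnit_iff_isUnit_det A).mp hA)

theorem MvPolynomial.IsHomogeneous.linSubst {p : MvPolynomial (Fin 3) K} {n : ℕ}
    (hp : p.IsHomogeneous n) (A : Matrix (Fin 3) (Fin 3) K) : (linSubst A p).IsHomogeneous n :=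
  one_mul n ▸ hp.aeval _ fun i => lin_isHomogeneous (A i)

theorem exists_isHomogeneous_linSubst_eq {A : Matrix (Fin 3) (Fin 3) K} (hA : IsUnit A)
    {f : MvPolynomial (Fin 3) K} {n : ℕ} (hf : f.IsHomogeneous n) :
    ∃ g : MvPolynomial (Fin 3) K, g.IsHomogeneous n ∧ f = linSubst A g :=
  ⟨linSubst A⁻¹ f, hf.linSubst _, (linSubst_linSubst_of_mul_eq_one
    (nonsing_inv_mul A ((isUnit_iff_isUnit_det A).mp hA)) f).symm⟩

theorem linSubst_monomial_one (A : Matrix (Fin 3) (Fin 3) K) (m : Fin 3 →₀ ℕ) :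
    linSubst A (monomial m 1) = (m.toMultiset.map fun i => lin (A i)).prod := by
  rw [linSubst, aeval_monomial, map_one, one_mul, Finsupp.toMultiset_map,
    Finsupp.prod_toMultiset, Finsupp.prod_mapDomain_index (fun _ => pow_zero _)
    (fun _ _ _ => pow_add _ _ _)]

theorem contra_eq_derivation (c : Fin 3 → K) :
    contra c = ⇑(∑ j, c j • pderiv j : Derivation K (MvPolynomial (Fin 3) K) _) := by
  ext p : 1
  rw [← Derivation.coeFnAddMonoidHom_apply, map_sum, Finset.sum_apply]
  rfl

theorem contra_add (c : Fin 3 → K) (p q : MvPolynomial (Fin 3) K) :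
    contra c (p + q) = contra c p + contra c q := by
  rw [contra_eq_derivation, map_add]

theorem contra_mul (c : Fin 3 → K) (p q : MvPolynomial (Fin 3) K) :
    contra c (p * q) = p * contra c q + q * contra c p := by
  rw [contra_eq_derivation, Derivation.leibniz, smul_eq_mul, smul_eq_mul]

@[simp]
theorem contra_C (c : Fin 3 → K) (a : K) : contra c (C a) = 0 := by
  simp [contra]

@[simp]
theorem contra_X (c : Fin 3 → K) (i : Fin 3) : contra c (X i) = C (c i) := by
  simp [contra, pderiv_X, Pi.single_apply, smul_eq_C_mul]

theorem contra_lin (c v : Fin 3 → K) : contra c (lin v) = C (c ⬝ᵥ v) := by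
  simp [contra, lin, dotProduct, pderiv_X, Pi.single_apply, smul_eq_C_mul, mul_comm]

theorem contra_eq_smul_pderiv {c : Fin 3 → K} {i : Fin 3} (hc : ∀ j ≠ i, c j = 0)
    (p : MvPolynomial (Fin 3) K) : contra c p = c i • pderiv i p :=
  Fintype.sum_eq_single i fun j hj => by rw [hc j hj, zero_smul]

theorem contra_linSubst (c : Fin 3 → K) (A : Matrix (Fin 3) (Fin 3) K)
    (p : MvPolynomial (Fin 3) K) :
    contra c (linSubst A p) = linSubst A (contra (fun i => c ⬝ᵥ A i) p) := by
  induction p using MvPolynomial.induction_on with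
  | C a => simp
  | add p q hp hq => rw [map_add, contra_add, contra_add, map_add, hp, hq]
  | mul_X p i hp =>
    rw [map_mul, contra_mul, contra_mul, linSubst_X, contra_lin, hp, contra_X, map_add, map_mul,
      map_mul, algHom_C, linSubst_X]
    rfl

theorem pderiv_pderiv_eq_zero_of_contra_contra_linSubst {A : Matrix (Fin 3) (Fin 3) K}
    (hA : IsUnit A) {x y : Fin 3 → K} {i j : Fin 3} (hx : ∀ k ≠ i, x ⬝ᵥ A k = 0)
    (hy : ∀ k ≠ j, y ⬝ᵥ A k = 0) (hxi : x ⬝ᵥ A i ≠ 0) (hyj : y ⬝ᵥ A j ≠ 0)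
    {g : MvPolynomial (Fin 3) K} (h : contra x (contra y (linSubst A g)) = 0) :
    pderiv i (pderiv j g) = 0 := by
  have : linSubst A ((x ⬝ᵥ A i) • (y ⬝ᵥ A j) • pderiv i (pderiv j g)) = linSubst A 0 := by
    rw [map_zero, ← h, contra_linSubst, contra_linSubst, contra_eq_smul_pderiv hx,
      contra_eq_smul_pderiv hy, Derivation.map_smul]
  simpa [hxi, hyj] using linSubst_injective hA this

theorem prod_lin_mem_symPow4 {ι : Type*} {T : Set (Fin 3 → K)} (w : ι → Fin 3 → K)
    {s : Multiset ι} (hs : Multiset.card s = 4) (hw : ∀ i ∈ s, w i ∈ T) :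
    (s.map fun i => lin (w i)).prod ∈ symPow4 T := by
  obtain ⟨l⟩ := s
  match l, hs with
  | [a, b, c, d], _ =>
    refine Submodule.subset_span ⟨![w a, w b, w c, w d], fun k => ?_, ?_⟩
    · fin_cases k <;> exact hw _ (by simp)
    · simp [Fin.prod_univ_four, mul_assoc]

def quarticSupport (A : Matrix (Fin 3) (Fin 3) K) (T : Set (Fin 3 → K)) : Set (Fin 3 →₀ ℕ) :=
  {m | m.degree = 4 ∧ ∀ j ∈ m.support, A j ∈ T}

theorem linSubst_mem_symPow4 {A : Matrix (Fin 3) (Fin 3) K} {T : Set (Fin 3 → K)}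
    {p : MvPolynomial (Fin 3) K} (hp : p ∈ restrictSupport K (quarticSupport A T)) :
    linSubst A p ∈ symPow4 T := by
  suffices restrictSupport K (quarticSupport A T) ≤ (symPow4 T).comap (linSubst A).toLinearMap from
    this hp
  rw [restrictSupport_eq_span, Submodule.span_le]
  rintro _ ⟨m, ⟨hdeg, hT⟩, rfl⟩
  rw [SetLike.mem_coe, Submodule.mem_comap, AlgHom.toLinearMap_apply, linSubst_monomial_one]
  refine prod_lin_mem_symPow4 A ?_ fun j hj => hT j ((Finsupp.mem_toMultiset _ _).mp hj)
  rw [Finsupp.card_toMultiset, ← hdeg, Finsupp.degree]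
  rfl

theorem exists_linSubst_eq_symPow4_add_symPow4 [CharZero K] {A : Matrix (Fin 3) (Fin 3) K}
    {T T' : Set (Fin 3 → K)} (h1 : A 1 ∈ T) (h2 : A 2 ∈ T) (h0' : A 0 ∈ T') (h2' : A 2 ∈ T')
    {g : MvPolynomial (Fin 3) K} (hg : g.IsHomogeneous 4) (hdd : pderiv 0 (pderiv 1 g) = 0) :
    ∃ f0 ∈ symPow4 T, ∃ f1 ∈ symPow4 T', linSubst A g = f0 + f1 := by
  have hsupp : ↑g.support ⊆ quarticSupport A T ∪ quarticSupport A T' := by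
    intro m hm
    have hdeg : m.degree = 4 := by
      rw [Finsupp.degree_eq_weight_one]
      exact hg (mem_support_iff.mp hm)
    rcases eq_zero_or_eq_zero_of_pderiv_pderiv_eq_zero (by decide) hdd hm with hm0 | hm1
    · refine .inl ⟨hdeg, fun j hj => ?_⟩
      fin_cases j
      exacts [absurd hm0 (Finsupp.mem_support_iff.mp hj), h1, h2]
    · refine .inr ⟨hdeg, fun j hj => ?_⟩
      fin_cases j
      exacts [h0', absurd hm1 (Finsupp.mem_support_iff.mp hj), h2']
  obtain ⟨g0, hg0, g1, hg1, rfl⟩ :=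
    Submodule.mem_sup.mp ((restrictSupport_union K _ _).le hsupp)
  exact ⟨_, linSubst_mem_symPow4 hg0, _, linSubst_mem_symPow4 hg1, map_add _ _ _⟩

end TernaryForms

theorem splits_in_two_binary_parts_general
    {K : Type*} [Field K] [CharZero K]
    (f : MvPolynomial (Fin 3) K) (hf : f.IsHomogeneous 4)
    (x0c x1c : Fin 3 → K) (hind : LinearIndependent K ![x0c, x1c])
    (h : contra x0c (contra x1c f) = 0)
    (v2 : Fin 3 → K) (hv2 : v2 ≠ 0)
    (h02 : ∑ j, x0c j * v2 j = 0) (h12 : ∑ j, x1c j * v2 j = 0)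
    (v1 : Fin 3 → K) (h01 : ∑ j, x0c j * v1 j = 0) (hv1 : v1 ∉ Submodule.span K {v2})
    (v0 : Fin 3 → K) (h10 : ∑ j, x1c j * v0 j = 0) (hv0 : v0 ∉ Submodule.span K {v2}) :
    ∃ f0 ∈ symPow4 (Submodule.span K {v1, v2} : Set (Fin 3 → K)),
      ∃ f1 ∈ symPow4 (Submodule.span K {v0, v2} : Set (Fin 3 → K)),
        f = f0 + f1 := by
  have h00 : x0c ⬝ᵥ v0 ≠ 0 := fun h00 =>
    hv0 (mem_span_of_dotProduct_eq_zero hind hv2 h02 h12 h00 h10)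
  have h11 : x1c ⬝ᵥ v1 ≠ 0 := fun h11 =>
    hv1 (mem_span_of_dotProduct_eq_zero hind hv2 h02 h12 h01 h11)
  set A : Matrix (Fin 3) (Fin 3) K := ![v0, v1, v2]
  have hA : IsUnit A := linearIndependent_rows_iff_isUnit.mp
    (linearIndependent_of_dotProduct h00 h01 h02 h10 h11 h12 hv2)
  have hx0 : ∀ k ≠ 0, x0c ⬝ᵥ A k = 0 := by
    intro k hk; fin_cases k; exacts [absurd rfl hk, h01, h02]
  have hx1 : ∀ k ≠ 1, x1c ⬝ᵥ A k = 0 := by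
    intro k hk; fin_cases k; exacts [h10, absurd rfl hk, h12]
  obtain ⟨g, hg, rfl⟩ := exists_isHomogeneous_linSubst_eq hA hf
  exact exists_linSubst_eq_symPow4_add_symPow4 (Submodule.subset_span (by simp [A]))
    (Submodule.subset_span (by simp [A])) (Submodule.subset_span (by simp [A]))
    (Submodule.subset_span (by simp [A])) hg
    (pderiv_pderiv_eq_zero_of_contra_contra_linSubst hA hx0 hx1 h00 h11 h)

/-- If `x⁰, x¹ ∈ S^1` are linearly independent with `(x⁰x¹) ⌟ f = 0`, and we choose any
nonzero `x₂ ∈ {x⁰,x¹}^⊥`, any `x₁ ∈ {x⁰}^⊥ − ⟨x₂⟩` and any `x₀ ∈ {x¹}^⊥ − ⟨x₂⟩`, then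
`f = f₀ + f₁` with `f₀ ∈ S⁴⟨x₁,x₂⟩` and `f₁ ∈ S⁴⟨x₀,x₂⟩`. -/
theorem splits_in_two_binary_parts
    {K : Type*} [Field K] [IsAlgClosed K] [CharZero K]
    (f : MvPolynomial (Fin 3) K) (hf : f.IsHomogeneous 4)
    (x0c x1c : Fin 3 → K) (hind : LinearIndependent K ![x0c, x1c])
    (h : contra x0c (contra x1c f) = 0)
    (v2 : Fin 3 → K) (hv2 : v2 ≠ 0)
    (h02 : ∑ j, x0c j * v2 j = 0) (h12 : ∑ j, x1c j * v2 j = 0)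
    (v1 : Fin 3 → K) (h01 : ∑ j, x0c j * v1 j = 0) (hv1 : v1 ∉ Submodule.span K {v2})
    (v0 : Fin 3 → K) (h10 : ∑ j, x1c j * v0 j = 0) (hv0 : v0 ∉ Submodule.span K {v2}) :
    ∃ f0 ∈ symPow4 (Submodule.span K {v1, v2} : Set (Fin 3 → K)),
      ∃ f1 ∈ symPow4 (Submodule.span K {v0, v2} : Set (Fin 3 → K)),
        f = f0 + f1 :=
  splits_in_two_binary_parts_general f hf x0c x1c hind h v2 hv2 h02 h12 v1 h01 hv1 v0 h10 hv0
end
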